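/- If M is a countable elementary substructure of a transitive ZFC⁻ model 𝓗 and x ∈ ⋃M, then Hull(M,x) = { f(x) : f ∈ M, x ∈ dom(f) } is the ⊆-minimal countable elementary substructure of 𝓗 that contains M as a subset and contains x as an element. -/

import Mathlib

noncomputable section

namespace CcPaper

/-! ### First-order logic over the membership relation -/

/-- First-order formulas in the language of set theory with `n` free variables. -/
inductive Fml : ℕ → Type
  | mem : ∀ {n}, Fin n → Fin n → Fml n
  | eq : ∀ {n}, Fin n → Fin n → Fml n
  | not : ∀ {n}, Fml n → Fml n
  | and : ∀ {n}, Fml n → Fml n → Fml n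
  | ex : ∀ {n}, Fml (n + 1) → Fml n

/-- Satisfaction of a formula in a class `D` of ZF-sets, quantifiers relativized to `D`. -/
def Sat (D : Set ZFSet.{0}) : ∀ {n}, Fml n → (Fin n → ZFSet.{0}) → Prop
  | _, .mem i j, v => v i ∈ v j
  | _, .eq i j, v => v i = v j
  | _, .not φ, v => ¬ Sat D φ v
  | _, .and φ ψ, v => Sat D φ v ∧ Sat D ψ v
  | _, .ex φ, v => ∃ x ∈ D, Sat D φ (Fin.snoc v x)

/-- `M` is an elementary substructure of the class `H` (w.r.t. `∈`). -/
def ElemSub (M H : Set ZFSet.{0}) : Prop :=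
  M ⊆ H ∧ ∀ {n : ℕ} (φ : Fml n) (v : Fin n → ZFSet.{0}), (∀ i, v i ∈ M) →
    (Sat M φ v ↔ Sat H φ v)

/-- A transitive class. -/
def TransClass (H : Set ZFSet.{0}) : Prop := ∀ x ∈ H, ∀ y ∈ x, y ∈ H

/-! ### Ordinals, ω₁, functions, hulls -/

/-- `x` is a (von Neumann) ordinal. -/
def IsOrd (x : ZFSet.{0}) : Prop := x.IsTransitive ∧ ∀ y ∈ x, ZFSet.IsTransitive y

/-- `o` is the first uncountable ordinal. -/
def IsOmega1 (o : ZFSet.{0}) : Prop :=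
  IsOrd o ∧ ¬ o.toSet.Countable ∧ ∀ β ∈ o.toSet, β.toSet.Countable

/-- `f` is a (set-)function, i.e. a single-valued set of Kuratowski pairs. -/
def IsFun (f : ZFSet.{0}) : Prop :=
  (∀ z ∈ f, ∃ a b, z = ZFSet.pair a b) ∧
    ∀ a b b', ZFSet.pair a b ∈ f → ZFSet.pair a b' ∈ f → b = b'

/-- `x` belongs to the domain of `f`. -/
def domMem (f x : ZFSet.{0}) : Prop := ∃ y, ZFSet.pair x y ∈ f

/-- `f` is a function with domain `d`. -/
def FunOn (f d : ZFSet.{0}) : Prop := IsFun f ∧ ∀ x, domMem f x ↔ x ∈ d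

/-- `Hull M x = { f(x) : f ∈ M, x ∈ dom f }`. -/
def Hull (M : Set ZFSet.{0}) (x : ZFSet.{0}) : Set ZFSet.{0} :=
  {y | ∃ f ∈ M, IsFun f ∧ ZFSet.pair x y ∈ f}

/-- `x ∥_{ω₁} M` : `Hull M x` and `M` contain the same elements of `ω₁`. -/
def ParallelO (ω1 x : ZFSet.{0}) (M : Set ZFSet.{0}) : Prop :=
  ∀ z ∈ ω1.toSet, (z ∈ Hull M x ↔ z ∈ M)

/-- `δ` is the ordinal `M ∩ ω₁`, i.e. `δ(M)`. -/
def DeltaIs (ω1 : ZFSet.{0}) (M : Set ZFSet.{0}) (δ : ZFSet.{0}) : Prop :=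
  IsOrd δ ∧ ∀ z : ZFSet.{0}, z ∈ δ ↔ (z ∈ ω1.toSet ∧ z ∈ M)

/-! ### H_θ, cardinality, regularity -/

/-- `y` lies in the transitive closure of `x`. -/
def InTC (y x : ZFSet.{0}) : Prop :=
  ∃ n : ℕ, ∃ c : Fin (n + 1) → ZFSet.{0}, c 0 ∈ x ∧
    (∀ i : Fin n, c i.succ ∈ c i.castSucc) ∧ c (Fin.last n) = y

/-- `x` has cardinality (strictly) less than the ordinal `θ`. -/
def CardLt (x θ : ZFSet.{0}) : Prop :=
  ∃ β ∈ θ.toSet, ∃ f : x.toSet → β.toSet, Function.Injective f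

/-- `x` has cardinality at most that of `κ`. -/
def CardLe (x κ : ZFSet.{0}) : Prop := ∃ f : x.toSet → κ.toSet, Function.Injective f

/-- The class `H_θ` of sets hereditarily of cardinality `< θ`. -/
def HClass (θ : ZFSet.{0}) : Set ZFSet.{0} :=
  {x | CardLt x θ ∧ ∀ y, InTC y x → CardLt y θ}

/-- `θ` is a regular uncountable cardinal. -/
def IsRegular (θ : ZFSet.{0}) : Prop :=
  IsOrd θ ∧ ZFSet.omega ∈ θ ∧ ¬ θ.toSet.Countable ∧
    ∀ β ∈ θ.toSet, ∀ f : ZFSet.{0} → ZFSet.{0}, (∀ x ∈ β.toSet, f x ∈ θ) →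
      ∃ γ ∈ θ.toSet, ∀ x ∈ β.toSet, f x ∈ γ

/-- `x ≪ θ` : the double powerset of `x` belongs to `H_θ`. -/
def Gg (x θ : ZFSet.{0}) : Prop := ZFSet.powerset (ZFSet.powerset x) ∈ HClass θ

/-! ### ZFC⁻ and ZFC• -/

/-- `r` is a wellordering of `a`, with "every nonempty subset" relativized to `H`. -/
def IsWellOrderOn (H : Set ZFSet.{0}) (r a : ZFSet.{0}) : Prop :=
  (∀ z ∈ r, ∃ x y, x ∈ a ∧ y ∈ a ∧ z = ZFSet.pair x y) ∧
  (∀ x ∈ a.toSet, ∀ y ∈ a.toSet, x ≠ y →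
    (ZFSet.pair x y ∈ r ↔ ZFSet.pair y x ∉ r)) ∧
  (∀ x y z : ZFSet.{0}, ZFSet.pair x y ∈ r → ZFSet.pair y z ∈ r → ZFSet.pair x z ∈ r) ∧
  (∀ b : ZFSet.{0}, b ∈ H → b ⊆ a → (∃ x, x ∈ b) →
    ∃ x, x ∈ b ∧ ∀ y, y ∈ b → y ≠ x → ZFSet.pair x y ∈ r)

/-- `H` is a model of ZFC⁻ (= ZF minus powerset, with collection and wellordering),
stated semantically for a class `H`. -/
def ModelsZFCminus (H : Set ZFSet.{0}) : Prop :=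
  (∅ : ZFSet.{0}) ∈ H ∧
  ZFSet.omega ∈ H ∧
  (∀ a ∈ H, ∀ b ∈ H, ZFSet.pair a b ∈ H) ∧
  (∀ a ∈ H, ZFSet.sUnion a ∈ H) ∧
  -- separation scheme
  (∀ (n : ℕ) (φ : Fml (n + 1)) (v : Fin n → ZFSet.{0}), (∀ i, v i ∈ H) → ∀ a ∈ H,
    ∃ b ∈ H, ∀ x : ZFSet.{0}, x ∈ b ↔ (x ∈ a ∧ Sat H φ (Fin.snoc v x))) ∧
  -- collection scheme
  (∀ (n : ℕ) (φ : Fml (n + 2)) (v : Fin n → ZFSet.{0}), (∀ i, v i ∈ H) → ∀ a ∈ H,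
    (∀ x ∈ a.toSet, ∃ y ∈ H, Sat H φ (Fin.snoc (Fin.snoc v x) y)) →
    ∃ b ∈ H, ∀ x ∈ a.toSet, ∃ y, y ∈ b ∧ Sat H φ (Fin.snoc (Fin.snoc v x) y)) ∧
  -- wellordering axiom
  (∀ a ∈ H, ∃ r, r ∈ H ∧ IsWellOrderOn H r a)

/-! ### Clubs, stationarity, antichains, selfgenericity, precipitousness -/

/-- `C ⊆ ω₁` is club in `ω₁`. -/
def IsClub (ω1 C : ZFSet.{0}) : Prop :=
  C ⊆ ω1 ∧ (∀ α ∈ ω1.toSet, ∃ β, β ∈ C ∧ α ∈ β) ∧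
    ∀ δ ∈ ω1.toSet, (∃ β, β ∈ δ) →
      (∀ α ∈ δ.toSet, ∃ β, β ∈ C ∧ α ∈ β ∧ β ∈ δ) → δ ∈ C

/-- `S` is a stationary subset of `ω₁`, where only clubs belonging to the class `H`
are considered (`H = Set.univ` gives genuine stationarity). -/
def StatIn (H : Set ZFSet.{0}) (ω1 S : ZFSet.{0}) : Prop :=
  S ⊆ ω1 ∧ ∀ C : ZFSet.{0}, C ∈ H → IsClub ω1 C → ∃ x, x ∈ S ∧ x ∈ C

/-- Genuine stationarity in `ω₁`. -/
abbrev Stat (ω1 S : ZFSet.{0}) : Prop := StatIn Set.univ ω1 S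

/-- `A` is a maximal antichain in `NS_{ω₁}⁺` (relative to the class `H`). -/
def MaxAC (H : Set ZFSet.{0}) (ω1 A : ZFSet.{0}) : Prop :=
  (∀ S ∈ A.toSet, StatIn H ω1 S) ∧
  (∀ S ∈ A.toSet, ∀ T ∈ A.toSet, S ≠ T → ¬ StatIn H ω1 (S ∩ T)) ∧
  (∀ S : ZFSet.{0}, S ∈ H → StatIn H ω1 S → ∃ T ∈ A.toSet, StatIn H ω1 (S ∩ T))

/-- A countable `M` is selfgeneric (relative to the ambient class `H`). -/
def SelfGenericIn (H : Set ZFSet.{0}) (ω1 : ZFSet.{0}) (M : Set ZFSet.{0}) : Prop :=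
  ∀ A : ZFSet.{0}, A ∈ M → MaxAC H ω1 A →
    ∃ S, S ∈ A ∧ S ∈ M ∧ ∃ δ, DeltaIs ω1 M δ ∧ δ ∈ S

/-- `W` is a maximal antichain of stationary subsets of `S` (relative to `H`). -/
def MaxACBelow (H : Set ZFSet.{0}) (ω1 S W : ZFSet.{0}) : Prop :=
  (∀ T ∈ W.toSet, T ⊆ S ∧ StatIn H ω1 T) ∧
  (∀ T ∈ W.toSet, ∀ T' ∈ W.toSet, T ≠ T' → ¬ StatIn H ω1 (T ∩ T')) ∧
  (∀ T : ZFSet.{0}, T ∈ H → T ⊆ S → StatIn H ω1 T → ∃ T' ∈ W.toSet, StatIn H ω1 (T ∩ T'))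

/-- Jech's combinatorial characterization of precipitousness of `NS_{ω₁}`,
relativized to the class `H`. -/
def PrecipitousIn (H : Set ZFSet.{0}) (ω1 : ZFSet.{0}) : Prop :=
  ∀ S : ZFSet.{0}, S ∈ H → StatIn H ω1 S →
    ∀ W : ℕ → ZFSet.{0}, (∀ n, W n ∈ H) → (∀ n, MaxACBelow H ω1 S (W n)) →
      (∀ n, ∀ T ∈ (W (n + 1)).toSet, ∃ T' ∈ (W n).toSet, T ⊆ T') →
      ∃ T : ℕ → ZFSet.{0}, (∀ n, T n ∈ (W n).toSet) ∧ (∀ n, T (n + 1) ⊆ T n) ∧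
        ∃ x, ∀ n, x ∈ T n

/-- ZFC• : ZFC⁻ + the double powerset of ω₁ exists + NS_{ω₁} is precipitous,
for a class `H`. -/
def PowIn (H : Set ZFSet.{0}) (a p : ZFSet.{0}) : Prop := p ∈ H ∧ ∀ x, x ∈ p ↔ (x ∈ H ∧ x ⊆ a)

/-- The ordinal `δ` is `ω₁` as computed inside the class `H`. -/
def IsOmega1Of (H : Set ZFSet.{0}) (δ : ZFSet.{0}) : Prop :=
  δ ∈ H ∧ IsOrd δ ∧
  (∀ β ∈ δ.toSet, ∃ f, f ∈ H ∧ IsFun f ∧ (∀ x, domMem f x ↔ x ∈ ZFSet.omega) ∧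
    ∀ y ∈ β.toSet, ∃ n, ZFSet.pair n y ∈ f) ∧
  ¬ ∃ f, f ∈ H ∧ IsFun f ∧ (∀ x, domMem f x ↔ x ∈ ZFSet.omega) ∧
    ∀ y ∈ δ.toSet, ∃ n, ZFSet.pair n y ∈ f

def ModelsZFCbullet (H : Set ZFSet.{0}) : Prop :=
  ModelsZFCminus H ∧ ∃ δ, IsOmega1Of H δ ∧
    (∃ p q, PowIn H δ p ∧ PowIn H p q) ∧ PrecipitousIn H δ

/-! ### Stationarity in `[H_θ]^ω` and projective stationarity -/

def ClosedUnder (M : Set ZFSet.{0}) (F : List ZFSet.{0} → ZFSet.{0}) : Prop :=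
  ∀ l : List ZFSet.{0}, (∀ x ∈ l, x ∈ M) → F l ∈ M

/-- `X` is a stationary family of countable subsets of the class `A`. -/
def StatPow (A : Set ZFSet.{0}) (X : Set (Set ZFSet.{0})) : Prop :=
  ∀ F : List ZFSet.{0} → ZFSet.{0}, (∀ l, F l ∈ A) →
    ∃ M ∈ X, M.Countable ∧ M ⊆ A ∧ ClosedUnder M F

/-- `X` contains a club of countable subsets of the class `A`. -/
def ClubPow (A : Set ZFSet.{0}) (X : Set (Set ZFSet.{0})) : Prop :=
  ∃ F : List ZFSet.{0} → ZFSet.{0}, (∀ l, F l ∈ A) ∧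
    ∀ M : Set ZFSet.{0}, M.Countable → M ⊆ A → ClosedUnder M F → M ∈ X

/-- `X` is a projective stationary family of countable subsets of `A`. -/
def ProjStatPow (ω1 : ZFSet.{0}) (A : Set ZFSet.{0}) (X : Set (Set ZFSet.{0})) : Prop :=
  ∀ S : ZFSet.{0}, Stat ω1 S →
    StatPow A {M | M ∈ X ∧ ∃ δ, DeltaIs ω1 M δ ∧ δ ∈ S}

/-! ### Forcing notions (as ZF-sets) -/

/-- `p ≤ q` in the order coded by the set of pairs `le`. -/
def pLe (le p q : ZFSet.{0}) : Prop := ZFSet.pair p q ∈ le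

def IsForcing (P le : ZFSet.{0}) : Prop :=
  (∀ z ∈ le, ∃ p q, p ∈ P ∧ q ∈ P ∧ z = ZFSet.pair p q) ∧
  (∀ p ∈ P.toSet, pLe le p p) ∧
  (∀ p q r : ZFSet.{0}, pLe le p q → pLe le q r → pLe le p r)

/-- Compatibility of conditions. -/
def CompatC (P le p q : ZFSet.{0}) : Prop := ∃ r, r ∈ P ∧ pLe le r p ∧ pLe le r q

/-- `A` is a maximal antichain in the forcing `(P, le)`. -/
def PMaxAC (P le A : ZFSet.{0}) : Prop :=
  A ⊆ P ∧ (∀ p ∈ A.toSet, ∀ q ∈ A.toSet, p ≠ q → ¬ CompatC P le p q) ∧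
    ∀ p ∈ P.toSet, ∃ q ∈ A.toSet, CompatC P le p q

/-- `p'` is an `(M,ℙ)`-semigeneric condition. -/
def Semigeneric (ω1 P le : ZFSet.{0}) (M : Set ZFSet.{0}) (p' : ZFSet.{0}) : Prop :=
  ∀ q, q ∈ P → pLe le q p' → ∀ A : ZFSet.{0}, A ∈ M → PMaxAC P le A →
    ∃ r, r ∈ A ∧ CompatC P le r q ∧ ParallelO ω1 r M

/-- `p'` is a strongly `(M,ℙ)`-semigeneric condition. -/
def StronglySemigeneric (ω1 P le : ZFSet.{0}) (M : Set ZFSet.{0}) (p' : ZFSet.{0}) : Prop :=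
  ∀ q, q ∈ P → pLe le q p' → ∃ t, t ∈ P ∧ ParallelO ω1 t M ∧
    ∀ r, r ∈ Hull M t → r ∈ P → pLe le r t → CompatC P le r q

/-- `ℙ` is semiproper with respect to `M`. -/
def SemiproperWrt (ω1 P le : ZFSet.{0}) (M : Set ZFSet.{0}) : Prop :=
  ∀ p, p ∈ P → p ∈ M → ∃ p', p' ∈ P ∧ pLe le p' p ∧ Semigeneric ω1 P le M p'

/-- `ℙ` is strongly semiproper with respect to `M`. -/
def StronglySemiproperWrt (ω1 P le : ZFSet.{0}) (M : Set ZFSet.{0}) : Prop :=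
  ∀ p, p ∈ P → p ∈ M → ∃ p', p' ∈ P ∧ pLe le p' p ∧ StronglySemigeneric ω1 P le M p'

/-- `p'` is a strongly `(M,ℙ)`-generic condition (Mitchell). -/
def StronglyGeneric (P le : ZFSet.{0}) (M : Set ZFSet.{0}) (p' : ZFSet.{0}) : Prop :=
  ∀ q, q ∈ P → pLe le q p' → ∃ t, t ∈ P ∧ t ∈ M ∧
    ∀ r, r ∈ M → r ∈ P → pLe le r t → CompatC P le r q

def StronglyProperWrt (P le : ZFSet.{0}) (M : Set ZFSet.{0}) : Prop :=
  ∀ p, p ∈ P → p ∈ M → ∃ p', p' ∈ P ∧ pLe le p' p ∧ StronglyGeneric P le M p'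

/-- `ℙ` is strongly proper. -/
def StronglyProper (P le : ZFSet.{0}) : Prop :=
  ∀ θ : ZFSet.{0}, IsRegular θ → Gg (ZFSet.pair P le) θ →
    ClubPow (HClass θ)
      {M | M.Countable ∧ ElemSub M (HClass θ) ∧ StronglyProperWrt P le M}

/-- `ℙ` is strongly ssp. -/
def StronglySSP (ω1 P le : ZFSet.{0}) : Prop :=
  ∀ θ : ZFSet.{0}, IsRegular θ → Gg (ZFSet.pair P le) θ →
    ProjStatPow ω1 (HClass θ)
      {M | M.Countable ∧ ElemSub M (HClass θ) ∧ StronglySemiproperWrt ω1 P le M}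

/-! ### The games -/

/-- Rules of a game in which the moves of P2 grow a model via `Hull`. -/
structure GameRules : Type 2 where
  legal1 : Set ZFSet.{0} → ZFSet.{0} → Prop
  legal2 : Set ZFSet.{0} → ZFSet.{0} → ZFSet.{0} → Prop

/-- The models built from P2's moves `b`. -/
def Mods (M0 : Set ZFSet.{0}) (b : ℕ → ZFSet.{0}) : ℕ → Set ZFSet
  | 0 => M0
  | n + 1 => Hull (Mods M0 b n) (b n)

/-- A strategy for P2: sees the past rounds and P1's current move. -/
abbrev Strat2 : Type 1 := List (ZFSet.{0} × ZFSet.{0}) → ZFSet.{0} → ZFSet.{0}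

/-- A strategy for P1: sees the past rounds. -/
abbrev Strat1 : Type 1 := List (ZFSet.{0} × ZFSet.{0}) → ZFSet.{0}

def hist2 (σ : Strat2) (a : ℕ → ZFSet.{0}) : ℕ → List (ZFSet × ZFSet.{0})
  | 0 => []
  | n + 1 => hist2 σ a n ++ [(a n, σ (hist2 σ a n) (a n))]

/-- P2's responses when following `σ` against the P1-moves `a`. -/
def resp (σ : Strat2) (a : ℕ → ZFSet.{0}) (n : ℕ) : ZFSet.{0} := σ (hist2 σ a n) (a n)

/-- `σ` is a winning strategy for P2 (the Constructor): as long as P1 has played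
legally, P2's answers are legal. -/
def P2Wins (G : GameRules) (M0 : Set ZFSet.{0}) (σ : Strat2) : Prop :=
  ∀ a : ℕ → ZFSet.{0}, ∀ n : ℕ,
    (∀ k, k ≤ n → G.legal1 (Mods M0 (resp σ a) k) (a k)) →
    G.legal2 (Mods M0 (resp σ a) n) (a n) (resp σ a n)

def hist1 (τ : Strat1) (b : ℕ → ZFSet.{0}) : ℕ → List (ZFSet × ZFSet.{0})
  | 0 => []
  | n + 1 => hist1 τ b n ++ [(τ (hist1 τ b n), b n)]

def move1 (τ : Strat1) (b : ℕ → ZFSet.{0}) (n : ℕ) : ZFSet.{0} := τ (hist1 τ b n)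

/-- `τ` is a winning strategy for P1 (the Challenger): P1 always moves legally
(as long as P2 has), and eventually P2's answer is illegal. -/
def P1Wins (G : GameRules) (M0 : Set ZFSet.{0}) (τ : Strat1) : Prop :=
  ∀ b : ℕ → ZFSet.{0},
    (∀ n, (∀ k, k < n → G.legal2 (Mods M0 b k) (move1 τ b k) (b k)) →
      G.legal1 (Mods M0 b n) (move1 τ b n)) ∧
    ∃ n, (∀ k, k < n → G.legal2 (Mods M0 b k) (move1 τ b k) (b k)) ∧
      ¬ G.legal2 (Mods M0 b n) (move1 τ b n) (b n)

/-- The antichain catching game `G^cat_M` (antichains relative to the class `H`). -/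
def catRules (H : Set ZFSet.{0}) (ω1 : ZFSet.{0}) : GameRules where
  legal1 M A := A ∈ M ∧ MaxAC H ω1 A
  legal2 M A S := S ∈ A ∧ (∃ δ, DeltaIs ω1 M δ ∧ δ ∈ S) ∧ ParallelO ω1 S M

/-- The capturing game `G^cap_M(X)`. -/
def capRules (ω1 : ZFSet.{0}) (X : Set ZFSet.{0}) : GameRules where
  legal1 _ x := x ∈ X
  legal2 M x f := IsFun f ∧ (∀ y, domMem f y ↔ y ∈ ω1) ∧
    (∀ a b, ZFSet.pair a b ∈ f → b ∈ X) ∧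
    (∃ δ, DeltaIs ω1 M δ ∧ ZFSet.pair δ x ∈ f) ∧ ParallelO ω1 f M

/-- The catching-capturing game `G^{c-c}_M(X)`; P1's moves are tagged pairs. -/
def ccRules (H : Set ZFSet.{0}) (ω1 : ZFSet.{0}) (X : Set ZFSet.{0}) : GameRules where
  legal1 M m := (∃ A, m = ZFSet.pair ∅ A ∧ (catRules H ω1).legal1 M A) ∨
    (∃ x, m = ZFSet.pair {∅} x ∧ x ∈ X)
  legal2 M m r := (∃ A, m = ZFSet.pair ∅ A ∧ (catRules H ω1).legal2 M A r) ∨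
    (∃ x, m = ZFSet.pair {∅} x ∧ (capRules ω1 X).legal2 M x r)

end CcPaper
namespace CcPaper
section Aux

lemma ZFSet.mem_toSet {a b : ZFSet.{0}} : a ∈ b.toSet ↔ a ∈ b := Iff.rfl

-- derived connectives
def Fml.or {n} (φ ψ : Fml n) : Fml n := Fml.not ((Fml.not φ).and (Fml.not ψ))
def Fml.imp {n} (φ ψ : Fml n) : Fml n := (Fml.not φ).or ψ
def Fml.iff {n} (φ ψ : Fml n) : Fml n := (φ.imp ψ).and (ψ.imp φ)
def Fml.all {n} (φ : Fml (n+1)) : Fml n := .not (.ex (.not φ))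

variable {D : Set ZFSet.{0}}

@[simp] lemma sat_mem {n} (i j : Fin n) (v) : Sat D (.mem i j) v ↔ v i ∈ v j := Iff.rfl
@[simp] lemma sat_eq {n} (i j : Fin n) (v) : Sat D (.eq i j) v ↔ v i = v j := Iff.rfl
@[simp] lemma sat_not {n} (φ : Fml n) (v) : Sat D (.not φ) v ↔ ¬ Sat D φ v := Iff.rfl
@[simp] lemma sat_and {n} (φ ψ : Fml n) (v) : Sat D (.and φ ψ) v ↔ Sat D φ v ∧ Sat D ψ v := Iff.rfl
@[simp] lemma sat_ex {n} (φ : Fml (n+1)) (v) :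
    Sat D (.ex φ) v ↔ ∃ x ∈ D, Sat D φ (Fin.snoc v x) := Iff.rfl
@[simp] lemma sat_or {n} (φ ψ : Fml n) (v) :
    Sat D (φ.or ψ) v ↔ Sat D φ v ∨ Sat D ψ v := by
  simp only [Fml.or, sat_not, sat_and]; tauto
@[simp] lemma sat_imp {n} (φ ψ : Fml n) (v) :
    Sat D (φ.imp ψ) v ↔ (Sat D φ v → Sat D ψ v) := by
  simp only [Fml.imp, sat_or, sat_not]; tauto
@[simp] lemma sat_iff {n} (φ ψ : Fml n) (v) :
    Sat D (φ.iff ψ) v ↔ (Sat D φ v ↔ Sat D ψ v) := by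
  simp only [Fml.iff, sat_and, sat_imp]; tauto
@[simp] lemma sat_all {n} (φ : Fml (n+1)) (v) :
    Sat D (φ.all) v ↔ ∀ x ∈ D, Sat D φ (Fin.snoc v x) := by
  simp only [Fml.all, sat_not, sat_ex]; push_neg; rfl

def Fml.rename : ∀ {n m}, (Fin n → Fin m) → Fml n → Fml m
  | _, _, ρ, .mem i j => .mem (ρ i) (ρ j)
  | _, _, ρ, .eq i j => .eq (ρ i) (ρ j)
  | _, _, ρ, .not φ => .not (φ.rename ρ)
  | _, _, ρ, .and φ ψ => .and (φ.rename ρ) (ψ.rename ρ)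
  | _, _, ρ, .ex φ => .ex (φ.rename (Fin.snoc (Fin.castSucc ∘ ρ) (Fin.last _)))

lemma sat_rename : ∀ {n m} (ρ : Fin n → Fin m) (φ : Fml n) (v : Fin m → ZFSet.{0}),
    Sat D (φ.rename ρ) v ↔ Sat D φ (v ∘ ρ)
  | _, _, ρ, .mem i j, v => Iff.rfl
  | _, _, ρ, .eq i j, v => Iff.rfl
  | _, _, ρ, .not φ, v => by simp [Fml.rename, sat_rename ρ φ v]
  | _, _, ρ, .and φ ψ, v => by simp [Fml.rename, sat_rename ρ φ v, sat_rename ρ ψ v]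
  | _, _, ρ, .ex φ, v => by
    simp only [Fml.rename, sat_ex]
    refine exists_congr fun x => and_congr_right fun _ => ?_
    rw [sat_rename]
    have : (Fin.snoc v x) ∘ (Fin.snoc (Fin.castSucc ∘ ρ) (Fin.last _)) =
        Fin.snoc (v ∘ ρ) x := by
      funext i
      refine Fin.lastCases ?_ (fun j => ?_) i <;>
        simp [Fin.snoc_castSucc, Fin.snoc_last]
    rw [this]

/-- v w = {v a} -/
def singF {k} (w a : Fin k) : Fml k :=
  Fml.all ((Fml.mem (Fin.last k) w.castSucc).iff (Fml.eq (Fin.last k) a.castSucc))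

/-- v w = {v a, v b} -/
def uprF {k} (w a b : Fin k) : Fml k :=
  Fml.all ((Fml.mem (Fin.last k) w.castSucc).iff
    ((Fml.eq (Fin.last k) a.castSucc).or (Fml.eq (Fin.last k) b.castSucc)))

/-- v p = pair (v a) (v b) -/
def eqPairF {k} (p a b : Fin k) : Fml k :=
  (Fml.all ((Fml.mem (Fin.last k) p.castSucc).imp
      ((singF (Fin.last k) a.castSucc).or (uprF (Fin.last k) a.castSucc b.castSucc)))).and
  ((Fml.ex ((Fml.mem (Fin.last k) p.castSucc).and (singF (Fin.last k) a.castSucc))).and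
   (Fml.ex ((Fml.mem (Fin.last k) p.castSucc).and
      (uprF (Fin.last k) a.castSucc b.castSucc))))

/-- pair (v a) (v b) ∈ v f -/
def pairMemF {k} (a b f : Fin k) : Fml k :=
  Fml.ex ((Fml.mem (Fin.last k) f.castSucc).and (eqPairF (Fin.last k) a.castSucc b.castSucc))

lemma sat_singF (hD : TransClass D) {k} {w a : Fin k} {v : Fin k → ZFSet.{0}}
    (hw : v w ∈ D) (ha : v a ∈ D) :
    Sat D (singF w a) v ↔ v w = {v a} := by
  simp only [singF, sat_all, sat_iff, sat_mem, sat_eq, Fin.snoc_castSucc, Fin.snoc_last]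
  constructor
  · intro h
    apply ZFSet.ext; intro u
    rw [ZFSet.mem_singleton]
    constructor
    · intro hu; exact (h u (hD _ hw u hu)).1 hu
    · rintro rfl; exact (h _ ha).2 rfl
  · intro h u _
    rw [h, ZFSet.mem_singleton]

lemma sat_uprF (hD : TransClass D) {k} {w a b : Fin k} {v : Fin k → ZFSet.{0}}
    (hw : v w ∈ D) (ha : v a ∈ D) (hb : v b ∈ D) :
    Sat D (uprF w a b) v ↔ v w = {v a, v b} := by
  simp only [uprF, sat_all, sat_iff, sat_mem, sat_eq, sat_or, Fin.snoc_castSucc, Fin.snoc_last]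
  constructor
  · intro h
    apply ZFSet.ext; intro u
    rw [ZFSet.mem_pair]
    constructor
    · intro hu; exact (h u (hD _ hw u hu)).1 hu
    · rintro (rfl | rfl)
      · exact (h _ ha).2 (Or.inl rfl)
      · exact (h _ hb).2 (Or.inr rfl)
  · intro h u _
    rw [h, ZFSet.mem_pair]

lemma sat_singF_snoc (hD : TransClass D) {k} {a : Fin k} {v : Fin k → ZFSet.{0}} {z : ZFSet.{0}}
    (hz : z ∈ D) (ha : v a ∈ D) :
    Sat D (singF (Fin.last k) a.castSucc) (Fin.snoc v z) ↔ z = {v a} := by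
  rw [sat_singF hD (by simpa using hz) (by simpa [Fin.snoc_castSucc] using ha)]
  simp [Fin.snoc_last, Fin.snoc_castSucc]

lemma sat_uprF_snoc (hD : TransClass D) {k} {a b : Fin k} {v : Fin k → ZFSet.{0}} {z : ZFSet.{0}}
    (hz : z ∈ D) (ha : v a ∈ D) (hb : v b ∈ D) :
    Sat D (uprF (Fin.last k) a.castSucc b.castSucc) (Fin.snoc v z) ↔ z = {v a, v b} := by
  rw [sat_uprF hD (by simpa using hz) (by simpa [Fin.snoc_castSucc] using ha)
    (by simpa [Fin.snoc_castSucc] using hb)]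
  simp [Fin.snoc_last, Fin.snoc_castSucc]

lemma sat_eqPairF (hD : TransClass D) {k} {p a b : Fin k} {v : Fin k → ZFSet.{0}}
    (hp : v p ∈ D) (ha : v a ∈ D) (hb : v b ∈ D) :
    Sat D (eqPairF p a b) v ↔ v p = ZFSet.pair (v a) (v b) := by
  constructor
  · rintro ⟨h1, ⟨s, hsD, hsp, hs⟩, ⟨u, huD, hup, hu⟩⟩
    rw [sat_singF_snoc hD hsD ha] at hs
    rw [sat_uprF_snoc hD huD ha hb] at hu
    simp only [sat_mem, Fin.snoc_castSucc, Fin.snoc_last] at hsp hup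
    apply ZFSet.ext; intro z
    simp only [ZFSet.pair, ZFSet.mem_insert_iff, ZFSet.mem_singleton]
    constructor
    · intro hz
      have hzD := hD _ hp z hz
      have h2 := (sat_all _ _).1 h1 z hzD
      simp only [sat_imp, sat_mem, Fin.snoc_castSucc, Fin.snoc_last, sat_or] at h2
      rcases h2 hz with h | h
      · left; rwa [sat_singF_snoc hD hzD ha] at h
      · right; rwa [sat_uprF_snoc hD hzD ha hb] at h
    · rintro (rfl | rfl)
      · rwa [← hs]
      · rwa [← hu]
  · rintro h
    have hsmem : ({v a} : ZFSet) ∈ v p := by rw [h]; simp [ZFSet.pair]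
    have humem : ({v a, v b} : ZFSet) ∈ v p := by rw [h]; simp [ZFSet.pair]
    refine ⟨?_, ?_, ?_⟩
    · rw [sat_all]
      intro z hzD
      simp only [sat_imp, sat_mem, Fin.snoc_castSucc, Fin.snoc_last, sat_or]
      intro hz
      rw [h] at hz
      simp only [ZFSet.pair, ZFSet.mem_insert_iff, ZFSet.mem_singleton] at hz
      rcases hz with rfl | rfl
      · left; rw [sat_singF_snoc hD hzD ha]
      · right; rw [sat_uprF_snoc hD hzD ha hb]
    · refine ⟨{v a}, hD _ hp _ hsmem, ?_, ?_⟩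
      · simpa [sat_mem, Fin.snoc_castSucc, Fin.snoc_last] using hsmem
      · rw [sat_singF_snoc hD (hD _ hp _ hsmem) ha]
    · refine ⟨{v a, v b}, hD _ hp _ humem, ?_, ?_⟩
      · simpa [sat_mem, Fin.snoc_castSucc, Fin.snoc_last] using humem
      · rw [sat_uprF_snoc hD (hD _ hp _ humem) ha hb]

lemma sat_eqPairF_snoc (hD : TransClass D) {k} {a b : Fin k} {v : Fin k → ZFSet.{0}}
    {z : ZFSet.{0}} (hz : z ∈ D) (ha : v a ∈ D) (hb : v b ∈ D) :
    Sat D (eqPairF (Fin.last k) a.castSucc b.castSucc) (Fin.snoc v z) ↔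
      z = ZFSet.pair (v a) (v b) := by
  rw [sat_eqPairF hD (by simpa using hz) (by simpa [Fin.snoc_castSucc] using ha)
    (by simpa [Fin.snoc_castSucc] using hb)]
  simp [Fin.snoc_last, Fin.snoc_castSucc]

lemma sat_pairMemF (hD : TransClass D) {k} {a b f : Fin k} {v : Fin k → ZFSet.{0}}
    (ha : v a ∈ D) (hb : v b ∈ D) (hf : v f ∈ D) :
    Sat D (pairMemF a b f) v ↔ ZFSet.pair (v a) (v b) ∈ v f := by
  constructor
  · rintro ⟨z, hzD, hzf, hz⟩
    rw [sat_eqPairF_snoc hD hzD ha hb] at hz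
    simp only [sat_mem, Fin.snoc_castSucc, Fin.snoc_last] at hzf
    rwa [← hz]
  · intro h
    refine ⟨ZFSet.pair (v a) (v b), hD _ hf _ h, ?_, ?_⟩
    · simpa [sat_mem, Fin.snoc_castSucc, Fin.snoc_last] using h
    · rw [sat_eqPairF_snoc hD (hD _ hf _ h) ha hb]

/-- a trivially true formula -/
def trueF {n} : Fml n := Fml.all (Fml.eq (Fin.last n) (Fin.last n))

@[simp] lemma sat_trueF {n} (v : Fin n → ZFSet.{0}) : Sat D trueF v := by
  simp [trueF]

def andN : ∀ {k n}, (Fin k → Fml n) → Fml n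
  | 0, _, _ => trueF
  | _ + 1, _, f => (andN (f ∘ Fin.castSucc)).and (f (Fin.last _))

lemma sat_andN : ∀ {k n} (f : Fin k → Fml n) (v : Fin n → ZFSet.{0}),
    Sat D (andN f) v ↔ ∀ i, Sat D (f i) v
  | 0, _, f, v => by simp [andN]
  | k + 1, _, f, v => by
    simp only [andN, sat_and, sat_andN (f ∘ Fin.castSucc) v]
    constructor
    · rintro ⟨h1, h2⟩ i
      refine Fin.lastCases h2 (fun j => h1 j) i
    · intro h
      exact ⟨fun j => h _, h _⟩

def snocMany {α : Type*} {n : ℕ} : ∀ {k}, (Fin n → α) → (Fin k → α) → Fin (n + k) → α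
  | 0, v, _ => v
  | _ + 1, v, u => Fin.snoc (snocMany v (u ∘ Fin.castSucc)) (u (Fin.last _))

lemma snocMany_castAdd {α : Type*} {n : ℕ} : ∀ {k} (v : Fin n → α) (u : Fin k → α) (i : Fin n),
    snocMany v u (Fin.castAdd k i) = v i
  | 0, v, u, i => rfl
  | k + 1, v, u, i => by
    have : (Fin.castAdd (k+1) i : Fin (n+k+1)) = Fin.castSucc (Fin.castAdd k i) := by
      ext; simp
    rw [snocMany, this, Fin.snoc_castSucc, snocMany_castAdd]

lemma snocMany_natAdd {α : Type*} {n : ℕ} : ∀ {k} (v : Fin n → α) (u : Fin k → α) (i : Fin k),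
    snocMany v u (Fin.natAdd n i) = u i
  | 0, _, _, i => i.elim0
  | k + 1, v, u, i => by
    refine Fin.lastCases ?_ (fun j => ?_) i
    · have : (Fin.natAdd n (Fin.last k) : Fin (n+k+1)) = Fin.last (n+k) := by ext; simp
      rw [snocMany, this]; exact Fin.snoc_last _ _
    · have : (Fin.natAdd n (Fin.castSucc j) : Fin (n+k+1)) = Fin.castSucc (Fin.natAdd n j) := by
        ext; simp
      rw [snocMany, this, Fin.snoc_castSucc, snocMany_natAdd]
      rfl

lemma snocMany_snoc {α : Type*} {n k : ℕ} (v : Fin n → α) (u : Fin k → α) (x : α) :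
    snocMany v (Fin.snoc u x) = Fin.snoc (snocMany v u) x := by
  have h1 : (Fin.snoc u x ∘ Fin.castSucc : Fin k → α) = u := by
    funext j; simp [Fin.snoc_castSucc]
  simp only [snocMany]
  rw [h1]
  simp

def exN : ∀ {n} (k : ℕ), Fml (n + k) → Fml n
  | _, 0, φ => φ
  | _, k + 1, φ => exN k (Fml.ex φ)

lemma sat_exN : ∀ {n} (k : ℕ) (φ : Fml (n + k)) (v : Fin n → ZFSet.{0}),
    Sat D (exN k φ) v ↔ ∃ u : Fin k → ZFSet.{0}, (∀ i, u i ∈ D) ∧ Sat D φ (snocMany v u)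
  | _, 0, φ, v => by
    constructor
    · intro h; exact ⟨Fin.elim0, fun i => i.elim0, h⟩
    · rintro ⟨u, _, h⟩; exact h
  | n, k + 1, φ, v => by
    rw [exN, sat_exN k]
    constructor
    · rintro ⟨u, hu, x, hx, h⟩
      refine ⟨Fin.snoc u x, ?_, ?_⟩
      · intro i
        refine Fin.lastCases ?_ (fun j => ?_) i <;> simp [Fin.snoc_castSucc, Fin.snoc_last]
        exacts [hx, hu j]
      · rwa [snocMany_snoc]
    · rintro ⟨u, hu, h⟩
      refine ⟨Fin.init u, fun j => hu _, u (Fin.last k), hu _, ?_⟩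
      rw [← snocMany_snoc]
      rwa [Fin.snoc_init_self]

/-- Transfer an existential from `H` to a witness in `M`. -/
lemma exists_in_M {M H : Set ZFSet.{0}} (hM : ElemSub M H) {m} (ψ : Fml (m+1))
    (p : Fin m → ZFSet.{0}) (hp : ∀ i, p i ∈ M) (h : Sat H (Fml.ex ψ) p) :
    ∃ w ∈ M, Sat H ψ (Fin.snoc p w) := by
  have := (hM.2 (Fml.ex ψ) p hp).2 h
  rcases this with ⟨w, hwM, hw⟩
  refine ⟨w, hwM, ?_⟩
  refine (hM.2 ψ (Fin.snoc p w) ?_).1 hw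
  intro i
  refine Fin.lastCases ?_ (fun j => ?_) i <;> simp [Fin.snoc_castSucc, Fin.snoc_last]
  exacts [hwM, hp j]

/-! ### Renamings used to plug `γ` into larger contexts -/

/-- params, then 4 extra vars; `t` at position `m+2`, `y` at `m+3`. -/
def totRen (m : ℕ) : Fin (m+2) → Fin (m+4) :=
  Fin.snoc (Fin.snoc (fun i : Fin m => i.castSucc.castSucc.castSucc.castSucc)
    ((Fin.last (m+2)).castSucc)) (Fin.last (m+3))

/-- params, then 4 extra vars; `t` at position `m+1`, `y` at `m+3`. -/
def colRen (m : ℕ) : Fin (m+2) → Fin (m+4) :=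
  Fin.snoc (Fin.snoc (fun i : Fin m => i.castSucc.castSucc.castSucc.castSucc)
    (((Fin.last (m+1)).castSucc).castSucc)) (Fin.last (m+3))

/-- params, then 5 extra vars; `t` at position `m+3`, `y` at `m+4`. -/
def bodyRen (m : ℕ) : Fin (m+2) → Fin (m+5) :=
  Fin.snoc (Fin.snoc (fun i : Fin m => i.castSucc.castSucc.castSucc.castSucc.castSucc)
    ((Fin.last (m+3)).castSucc)) (Fin.last (m+4))

lemma totRen_comp {m} (p : Fin m → ZFSet.{0}) (a1 a2 t y : ZFSet.{0}) :
    (Fin.snoc (Fin.snoc (Fin.snoc (Fin.snoc p a1) a2) t) y : Fin (m+4) → ZFSet.{0}) ∘ totRen m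
      = Fin.snoc (Fin.snoc p t) y := by
  funext i
  refine Fin.lastCases ?_ (fun j => ?_) i
  · simp [totRen, Fin.snoc_last, Fin.snoc_castSucc]
  · refine Fin.lastCases ?_ (fun i => ?_) j <;>
      simp [totRen, Fin.snoc_last, Fin.snoc_castSucc]

lemma colRen_comp {m} (p : Fin m → ZFSet.{0}) (a1 t w y : ZFSet.{0}) :
    (Fin.snoc (Fin.snoc (Fin.snoc (Fin.snoc p a1) t) w) y : Fin (m+4) → ZFSet.{0}) ∘ colRen m
      = Fin.snoc (Fin.snoc p t) y := by
  funext i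
  refine Fin.lastCases ?_ (fun j => ?_) i
  · simp [colRen, Fin.snoc_last, Fin.snoc_castSucc]
  · refine Fin.lastCases ?_ (fun i => ?_) j <;>
      simp [colRen, Fin.snoc_last, Fin.snoc_castSucc]

lemma bodyRen_comp {m} (p : Fin m → ZFSet.{0}) (a1 a2 a3 t y : ZFSet.{0}) :
    (Fin.snoc (Fin.snoc (Fin.snoc (Fin.snoc (Fin.snoc p a1) a2) a3) t) y :
      Fin (m+5) → ZFSet.{0}) ∘ bodyRen m = Fin.snoc (Fin.snoc p t) y := by
  funext i
  refine Fin.lastCases ?_ (fun j => ?_) i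
  · simp [bodyRen, Fin.snoc_last, Fin.snoc_castSucc]
  · refine Fin.lastCases ?_ (fun i => ?_) j <;>
      simp [bodyRen, Fin.snoc_last, Fin.snoc_castSucc]

/-! ### The formula asserting `g` is a good graph of witnesses -/

/-- every element of `g` is a pair `(t, y)` with `t ∈ b` and `γ(t,y)` -/
def relOKF {m} (γ : Fml (m+2)) : Fml (m+2) :=
  Fml.all ((Fml.mem (Fin.last (m+2)) ((Fin.last (m+1)).castSucc)).imp
    (Fml.ex (Fml.ex
      ((eqPairF (((Fin.last (m+2)).castSucc).castSucc) ((Fin.last (m+3)).castSucc)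
          (Fin.last (m+4))).and
       ((Fml.mem ((Fin.last (m+3)).castSucc)
          (((((Fin.last m).castSucc).castSucc).castSucc).castSucc)).and
        (Fml.rename (bodyRen m) γ))))))

/-- for every `t ∈ b`, if some `y` satisfies `γ(t,y)` then some `(t,y) ∈ g` -/
def totF {m} (γ : Fml (m+2)) : Fml (m+2) :=
  Fml.all ((Fml.mem (Fin.last (m+2)) (((Fin.last m).castSucc).castSucc)).imp
    ((Fml.ex (Fml.rename (totRen m) γ)).imp
     (Fml.ex (pairMemF ((Fin.last (m+2)).castSucc) (Fin.last (m+3))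
        (((Fin.last (m+1)).castSucc).castSucc)))))

def bodyF {m} (γ : Fml (m+2)) : Fml (m+2) := (relOKF γ).and (totF γ)

lemma sat_bodyF (hD : TransClass D) {m} (γ : Fml (m+2)) (p : Fin m → ZFSet.{0})
    (b g : ZFSet.{0}) (hg : g ∈ D) :
    Sat D (bodyF γ) (Fin.snoc (Fin.snoc p b) g) ↔
      ((∀ z ∈ g.toSet, ∃ t ∈ D, ∃ y ∈ D, z = ZFSet.pair t y ∧ t ∈ b ∧
          Sat D γ (Fin.snoc (Fin.snoc p t) y)) ∧
       (∀ t, t ∈ D → t ∈ b → (∃ y ∈ D, Sat D γ (Fin.snoc (Fin.snoc p t) y)) →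
          ∃ y ∈ D, ZFSet.pair t y ∈ g)) := by
  constructor
  · rintro ⟨h1, h2⟩
    constructor
    · intro z hz
      have hzD : z ∈ D := hD _ hg _ hz
      have := (sat_all _ _).1 h1 z hzD
      rw [sat_imp] at this
      simp only [sat_mem, Fin.snoc_last, Fin.snoc_castSucc] at this
      rcases this hz with ⟨t, htD, y, hyD, hsat⟩
      refine ⟨t, htD, y, hyD, ?_⟩
      rw [sat_and, sat_and] at hsat
      obtain ⟨he, hm, hγ⟩ := hsat
      rw [sat_eqPairF hD (by simp [Fin.snoc_last, Fin.snoc_castSucc]; exact hzD)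
        (by simp [Fin.snoc_last, Fin.snoc_castSucc]; exact htD)
        (by simp [Fin.snoc_last, Fin.snoc_castSucc]; exact hyD)] at he
      simp only [Fin.snoc_last, Fin.snoc_castSucc] at he
      rw [sat_mem] at hm
      simp only [Fin.snoc_last, Fin.snoc_castSucc] at hm
      rw [sat_rename, bodyRen_comp] at hγ
      exact ⟨he, hm, hγ⟩
    · intro t htD htb hpre
      have := (sat_all _ _).1 h2 t htD
      rw [sat_imp, sat_imp] at this
      simp only [sat_mem, Fin.snoc_last, Fin.snoc_castSucc] at this
      have hcons := this htb ?_
      · rcases hcons with ⟨y, hyD, hy⟩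
        rw [sat_pairMemF hD (by simp [Fin.snoc_last, Fin.snoc_castSucc]; exact htD)
          (by simp [Fin.snoc_last, Fin.snoc_castSucc]; exact hyD)
          (by simp [Fin.snoc_last, Fin.snoc_castSucc]; exact hg)] at hy
        simp only [Fin.snoc_last, Fin.snoc_castSucc] at hy
        exact ⟨y, hyD, hy⟩
      · rcases hpre with ⟨y, hyD, hy⟩
        refine ⟨y, hyD, ?_⟩
        rw [sat_rename, totRen_comp]
        exact hy
  · rintro ⟨h1, h2⟩
    constructor
    · simp only [relOKF]
      rw [sat_all]
      intro z hzD
      rw [sat_imp]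
      simp only [sat_mem, Fin.snoc_last, Fin.snoc_castSucc]
      intro hz
      rcases h1 z hz with ⟨t, htD, y, hyD, he, hm, hγ⟩
      refine ⟨t, htD, y, hyD, ?_⟩
      rw [sat_and, sat_and]
      refine ⟨?_, ?_, ?_⟩
      · rw [sat_eqPairF hD (by simp [Fin.snoc_last, Fin.snoc_castSucc]; exact hzD)
          (by simp [Fin.snoc_last, Fin.snoc_castSucc]; exact htD)
          (by simp [Fin.snoc_last, Fin.snoc_castSucc]; exact hyD)]
        simp only [Fin.snoc_last, Fin.snoc_castSucc]
        exact he
      · rw [sat_mem]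
        simp only [Fin.snoc_last, Fin.snoc_castSucc]
        exact hm
      · rw [sat_rename, bodyRen_comp]
        exact hγ
    · simp only [totF]
      rw [sat_all]
      intro t htD
      rw [sat_imp, sat_imp]
      simp only [sat_mem, Fin.snoc_last, Fin.snoc_castSucc]
      intro htb hpre
      have : ∃ y ∈ D, Sat D γ (Fin.snoc (Fin.snoc p t) y) := by
        rcases hpre with ⟨y, hyD, hy⟩
        rw [sat_rename, totRen_comp] at hy
        exact ⟨y, hyD, hy⟩
      rcases h2 t htD htb this with ⟨y, hyD, hy⟩
      refine ⟨y, hyD, ?_⟩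
      rw [sat_pairMemF hD (by simp [Fin.snoc_last, Fin.snoc_castSucc]; exact htD)
        (by simp [Fin.snoc_last, Fin.snoc_castSucc]; exact hyD)
        (by simp [Fin.snoc_last, Fin.snoc_castSucc]; exact hg)]
      simp only [Fin.snoc_last, Fin.snoc_castSucc]
      exact hy

/-! ### Constructing the witness graph inside `H` -/

lemma graph_in_H {H : Set ZFSet.{0}} (hHt : TransClass H) (hHzfc : ModelsZFCminus H)
    {m} (γ : Fml (m+2)) (p : Fin m → ZFSet.{0}) (hp : ∀ i, p i ∈ H)
    (b : ZFSet.{0}) (hb : b ∈ H) :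
    ∃ g ∈ H, Sat H (bodyF γ) (Fin.snoc (Fin.snoc p b) g) := by
  have hP : ∀ i, (Fin.snoc p b : Fin (m+1) → ZFSet.{0}) i ∈ H := by
    intro i
    refine Fin.lastCases ?_ (fun j => ?_) i <;> simp [Fin.snoc_last, Fin.snoc_castSucc]
    exacts [hb, hp j]
  -- collection
  set θ : Fml (m+3) :=
    (Fml.ex (Fml.rename (colRen m) γ)).imp
      (Fml.ex ((eqPairF ((Fin.last (m+2)).castSucc) (((Fin.last (m+1)).castSucc).castSucc)
          (Fin.last (m+3))).and (Fml.rename (colRen m) γ))) with hθ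
  obtain ⟨c, hcH, hc⟩ :=
    hHzfc.2.2.2.2.2.1 (m+1) θ (Fin.snoc p b) hP b hb (by
      intro t ht
      have htH : t ∈ H := hHt b hb t ht
      by_cases hpre : ∃ y ∈ H, Sat H γ (Fin.snoc (Fin.snoc p t) y)
      · obtain ⟨y0, hy0H, hy0⟩ := hpre
        refine ⟨ZFSet.pair t y0, hHzfc.2.2.1 t htH y0 hy0H, ?_⟩
        rw [hθ, sat_imp]
        intro _
        rw [sat_ex]
        refine ⟨y0, hy0H, ?_⟩
        rw [sat_and]
        constructor
        · rw [sat_eqPairF hHt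
            (by simpa [Fin.snoc_last, Fin.snoc_castSucc] using hHzfc.2.2.1 t htH y0 hy0H)
            (by simpa [Fin.snoc_last, Fin.snoc_castSucc] using htH)
            (by simpa [Fin.snoc_last, Fin.snoc_castSucc] using hy0H)]
          simp [Fin.snoc_last, Fin.snoc_castSucc]
        · rw [sat_rename, colRen_comp]
          exact hy0
      · refine ⟨∅, hHzfc.1, ?_⟩
        rw [hθ, sat_imp]
        intro hant
        exfalso
        rw [sat_ex] at hant
        obtain ⟨y, hyH, hy⟩ := hant
        rw [sat_rename, colRen_comp] at hy
        exact hpre ⟨y, hyH, hy⟩)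
  -- separation
  set ζ : Fml (m+2) :=
    Fml.ex (Fml.ex ((eqPairF (((Fin.last (m+1)).castSucc).castSucc) ((Fin.last (m+2)).castSucc)
        (Fin.last (m+3))).and
      ((Fml.mem ((Fin.last (m+2)).castSucc) ((((Fin.last m).castSucc).castSucc).castSucc)).and
        (Fml.rename (totRen m) γ)))) with hζ
  obtain ⟨g, hgH, hgmem⟩ := hHzfc.2.2.2.2.1 (m+1) ζ (Fin.snoc p b) hP c hcH
  have hζdec : ∀ z, z ∈ H → (Sat H ζ (Fin.snoc (Fin.snoc p b) z) ↔
      ∃ t ∈ H, ∃ y ∈ H, z = ZFSet.pair t y ∧ t ∈ b ∧ Sat H γ (Fin.snoc (Fin.snoc p t) y)) := by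
    intro z hzH
    rw [hζ, sat_ex]
    refine exists_congr fun t => and_congr_right fun htH => ?_
    rw [sat_ex]
    refine exists_congr fun y => and_congr_right fun hyH => ?_
    rw [sat_and, sat_and]
    rw [sat_eqPairF hHt (by simp [Fin.snoc_last, Fin.snoc_castSucc]; exact hzH)
      (by simp [Fin.snoc_last, Fin.snoc_castSucc]; exact htH)
      (by simp [Fin.snoc_last, Fin.snoc_castSucc]; exact hyH)]
    rw [sat_mem, sat_rename, totRen_comp]
    simp only [Fin.snoc_last, Fin.snoc_castSucc]
  refine ⟨g, hgH, (sat_bodyF hHt γ p b g hgH).2 ⟨?_, ?_⟩⟩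
  · intro z hz
    rw [ZFSet.mem_toSet] at hz
    have hzc := (hgmem z).1 hz
    exact (hζdec z (hHt c hcH z hzc.1)).1 hzc.2
  · intro t htH htb hpre
    obtain ⟨w, hwc, hwθ⟩ := hc t (by rwa [ZFSet.mem_toSet])
    rw [hθ, sat_imp] at hwθ
    have hcons := hwθ (by
      rw [sat_ex]
      obtain ⟨y, hyH, hy⟩ := hpre
      refine ⟨y, hyH, ?_⟩
      rw [sat_rename, colRen_comp]
      exact hy)
    rw [sat_ex] at hcons
    obtain ⟨y', hy'H, hy'⟩ := hcons
    rw [sat_and] at hy'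
    obtain ⟨he, hγ'⟩ := hy'
    have hwH : w ∈ H := hHt c hcH w hwc
    rw [sat_eqPairF hHt (by simp [Fin.snoc_last, Fin.snoc_castSucc]; exact hwH)
      (by simp [Fin.snoc_last, Fin.snoc_castSucc]; exact htH)
      (by simp [Fin.snoc_last, Fin.snoc_castSucc]; exact hy'H)] at he
    simp only [Fin.snoc_last, Fin.snoc_castSucc] at he
    rw [sat_rename, colRen_comp] at hγ'
    refine ⟨y', hy'H, ?_⟩
    have : w ∈ g := (hgmem w).2 ⟨hwc, (hζdec w hwH).2 ⟨t, htH, y', hy'H, he, htb, hγ'⟩⟩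
    rwa [← he]

lemma pair_mem_trans {H : Set ZFSet.{0}} (hHt : TransClass H) {s a b : ZFSet.{0}}
    (hs : s ∈ H) (h : ZFSet.pair a b ∈ s) : a ∈ H ∧ b ∈ H := by
  have hp : ZFSet.pair a b ∈ H := hHt s hs _ h
  have h1 : ({a} : ZFSet) ∈ ZFSet.pair a b := by
    show _ ∈ ({{a},{a,b}} : ZFSet); exact ZFSet.mem_pair.2 (Or.inl rfl)
  have h2 : ({a, b} : ZFSet) ∈ ZFSet.pair a b := by
    show _ ∈ ({{a},{a,b}} : ZFSet); exact ZFSet.mem_pair.2 (Or.inr rfl)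
  constructor
  · exact hHt _ (hHt _ hp _ h1) a (ZFSet.mem_singleton.2 rfl)
  · exact hHt _ (hHt _ hp _ h2) b (ZFSet.mem_pair.2 (Or.inr rfl))

@[simp] lemma snoc_cast_zero {α : Type*} {k} (v : Fin (k+1) → α) (x : α) :
    (Fin.snoc v x : Fin (k+2) → α) 0 = v 0 := by
  have h : ((0 : Fin (k+2))) = Fin.castSucc 0 := by ext; simp
  rw [h, Fin.snoc_castSucc]

@[simp] lemma snoc_cast_one {α : Type*} {k} (v : Fin (k+2) → α) (x : α) :
    (Fin.snoc v x : Fin (k+3) → α) 1 = v 1 := by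
  have h : ((1 : Fin (k+3))) = Fin.castSucc 1 := by ext; simp
  rw [h, Fin.snoc_castSucc]

@[simp] lemma snoc_fin1_zero {α : Type*} (v : Fin 0 → α) (x : α) :
    (Fin.snoc v x : Fin 1 → α) 0 = x := by
  have h : ((0 : Fin 1)) = Fin.last 0 := by ext; simp
  rw [h, Fin.snoc_last]

@[simp] lemma snoc_fin2_one {α : Type*} (v : Fin 1 → α) (x : α) :
    (Fin.snoc v x : Fin 2 → α) 1 = x := by
  have h : ((1 : Fin 2)) = Fin.last 1 := by ext; simp
  rw [h, Fin.snoc_last]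

/-- The matrix of the uniformization formula: `g2 ⊆ g1`, `g2` a function, same domain. -/
def XiM : Fml 2 :=
  (Fml.all ((Fml.mem (Fin.last 2) ((Fin.last 1).castSucc)).imp
      (Fml.mem (Fin.last 2) (((0 : Fin 1).castSucc).castSucc)))).and
  ((Fml.all ((Fml.mem (Fin.last 2) ((Fin.last 1).castSucc)).imp
      (Fml.ex (Fml.ex (eqPairF (((Fin.last 2).castSucc).castSucc) ((Fin.last 3).castSucc)
        (Fin.last 4)))))).and
  ((Fml.all (Fml.all (Fml.all
      (((pairMemF (((Fin.last 2).castSucc).castSucc) ((Fin.last 3).castSucc)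
          (((Fin.last 1).castSucc).castSucc).castSucc).and
        (pairMemF (((Fin.last 2).castSucc).castSucc) (Fin.last 4)
          (((Fin.last 1).castSucc).castSucc).castSucc)).imp
       (Fml.eq ((Fin.last 3).castSucc) (Fin.last 4)))))).and
   (Fml.all (Fml.all ((pairMemF ((Fin.last 2).castSucc) (Fin.last 3)
        ((((0 : Fin 1).castSucc).castSucc).castSucc)).imp
      (Fml.ex (pairMemF (((Fin.last 2).castSucc).castSucc) (Fin.last 4)
        (((Fin.last 1).castSucc).castSucc).castSucc)))))))

lemma sat_XiM (hD : TransClass D) {g1 g2 : ZFSet.{0}} (hg1 : g1 ∈ D) (hg2 : g2 ∈ D) :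
    Sat D XiM (Fin.snoc (fun _ : Fin 1 => g1) g2) ↔
      ((∀ z ∈ D, z ∈ g2 → z ∈ g1) ∧
       (∀ z ∈ D, z ∈ g2 → ∃ t ∈ D, ∃ y ∈ D, z = ZFSet.pair t y) ∧
       (∀ t ∈ D, ∀ y ∈ D, ∀ y' ∈ D, ZFSet.pair t y ∈ g2 → ZFSet.pair t y' ∈ g2 → y = y') ∧
       (∀ t ∈ D, ∀ y ∈ D, ZFSet.pair t y ∈ g1 → ∃ y' ∈ D, ZFSet.pair t y' ∈ g2)) := by
  rw [XiM, sat_and, sat_and, sat_and]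
  refine and_congr ?_ (and_congr ?_ (and_congr ?_ ?_))
  · rw [sat_all]
    refine forall_congr' fun z => ?_
    rw [sat_imp, sat_mem, sat_mem]
    simp [Fin.snoc_last, Fin.snoc_castSucc, -Fin.reduceLast, -Fin.reduceCastSucc]
  · rw [sat_all]
    refine forall_congr' fun z => forall_congr' fun hz => ?_
    rw [sat_imp, sat_mem]
    simp only [Fin.snoc_last, Fin.snoc_castSucc, -Fin.reduceLast, -Fin.reduceCastSucc]
    refine imp_congr Iff.rfl ?_
    rw [sat_ex]
    refine exists_congr fun t => and_congr_right fun ht => ?_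
    rw [sat_ex]
    refine exists_congr fun y => and_congr_right fun hy => ?_
    rw [sat_eqPairF hD (by simpa [Fin.snoc_last, Fin.snoc_castSucc, -Fin.reduceLast, -Fin.reduceCastSucc] using hz)
      (by simpa [Fin.snoc_last, Fin.snoc_castSucc, -Fin.reduceLast, -Fin.reduceCastSucc] using ht)
      (by simpa [Fin.snoc_last, Fin.snoc_castSucc, -Fin.reduceLast, -Fin.reduceCastSucc] using hy)]
    simp [Fin.snoc_last, Fin.snoc_castSucc, -Fin.reduceLast, -Fin.reduceCastSucc]
  · rw [sat_all]
    refine forall_congr' fun t => forall_congr' fun ht => ?_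
    rw [sat_all]
    refine forall_congr' fun y => forall_congr' fun hy => ?_
    rw [sat_all]
    refine forall_congr' fun y' => forall_congr' fun hy' => ?_
    rw [sat_imp, sat_and, sat_eq]
    rw [sat_pairMemF hD (by simpa [Fin.snoc_last, Fin.snoc_castSucc, -Fin.reduceLast, -Fin.reduceCastSucc] using ht)
      (by simpa [Fin.snoc_last, Fin.snoc_castSucc, -Fin.reduceLast, -Fin.reduceCastSucc] using hy)
      (by simpa [Fin.snoc_last, Fin.snoc_castSucc, -Fin.reduceLast, -Fin.reduceCastSucc] using hg2)]
    rw [sat_pairMemF hD (by simpa [Fin.snoc_last, Fin.snoc_castSucc, -Fin.reduceLast, -Fin.reduceCastSucc] using ht)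
      (by simpa [Fin.snoc_last, Fin.snoc_castSucc, -Fin.reduceLast, -Fin.reduceCastSucc] using hy')
      (by simpa [Fin.snoc_last, Fin.snoc_castSucc, -Fin.reduceLast, -Fin.reduceCastSucc] using hg2)]
    simp [Fin.snoc_last, Fin.snoc_castSucc, -Fin.reduceLast, -Fin.reduceCastSucc]
  · rw [sat_all]
    refine forall_congr' fun t => forall_congr' fun ht => ?_
    rw [sat_all]
    refine forall_congr' fun y => forall_congr' fun hy => ?_
    rw [sat_imp]
    rw [sat_pairMemF hD (by simpa [Fin.snoc_last, Fin.snoc_castSucc, -Fin.reduceLast, -Fin.reduceCastSucc] using ht)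
      (by simpa [Fin.snoc_last, Fin.snoc_castSucc, -Fin.reduceLast, -Fin.reduceCastSucc] using hy)
      (by simpa [Fin.snoc_last, Fin.snoc_castSucc, -Fin.reduceLast, -Fin.reduceCastSucc] using hg1)]
    simp only [Fin.snoc_last, Fin.snoc_castSucc, -Fin.reduceLast, -Fin.reduceCastSucc]
    refine imp_congr Iff.rfl ?_
    rw [sat_ex]
    refine exists_congr fun y' => and_congr_right fun hy' => ?_
    rw [sat_pairMemF hD (by simpa [Fin.snoc_last, Fin.snoc_castSucc, -Fin.reduceLast, -Fin.reduceCastSucc] using ht)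
      (by simpa [Fin.snoc_last, Fin.snoc_castSucc, -Fin.reduceLast, -Fin.reduceCastSucc] using hy')
      (by simpa [Fin.snoc_last, Fin.snoc_castSucc, -Fin.reduceLast, -Fin.reduceCastSucc] using hg2)]
    simp [Fin.snoc_last, Fin.snoc_castSucc, -Fin.reduceLast, -Fin.reduceCastSucc]

/-- Separation formula choosing `r`-minimal pairs: params `g1, r`, free var `z`. -/
def xiE : Fml 7 :=
  (pairMemF (((((Fin.last 2).castSucc).castSucc).castSucc).castSucc)
      ((Fin.last 5).castSucc)
      (((((((1 : Fin 2)).castSucc).castSucc).castSucc).castSucc).castSucc)).and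
    (Fml.not (pairMemF ((Fin.last 5).castSucc)
      (((((Fin.last 2).castSucc).castSucc).castSucc).castSucc)
      (((((((1 : Fin 2)).castSucc).castSucc).castSucc).castSucc).castSucc)))

def xiInner7 : Fml 7 :=
  (eqPairF ((Fin.last 5).castSucc) ((((Fin.last 3).castSucc).castSucc).castSucc)
      (Fin.last 6)).imp
    ((Fml.not (Fml.eq ((Fin.last 5).castSucc)
        (((((Fin.last 2).castSucc).castSucc).castSucc).castSucc))).imp xiE)

def xiF : Fml 3 :=
  Fml.ex (Fml.ex ((eqPairF (((Fin.last 2).castSucc).castSucc) ((Fin.last 3).castSucc)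
      (Fin.last 4)).and
    (Fml.all ((Fml.mem (Fin.last 5)
        ((((((0 : Fin 2)).castSucc).castSucc).castSucc).castSucc)).imp
      (Fml.all xiInner7)))))

lemma sat_xiF (hD : TransClass D) {g1 r z : ZFSet.{0}} (hg1 : g1 ∈ D) (hr : r ∈ D)
    (hz : z ∈ D) :
    Sat D xiF (Fin.snoc ![g1, r] z) ↔
      ∃ t ∈ D, ∃ y ∈ D, z = ZFSet.pair t y ∧
        ∀ w ∈ D, w ∈ g1 → ∀ y' ∈ D, w = ZFSet.pair t y' → w ≠ z →
          (ZFSet.pair z w ∈ r ∧ ZFSet.pair w z ∉ r) := by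
  rw [xiF, sat_ex]
  refine exists_congr fun t => and_congr_right fun ht => ?_
  rw [sat_ex]
  refine exists_congr fun y => and_congr_right fun hy => ?_
  rw [sat_and]
  refine and_congr ?_ ?_
  · rw [sat_eqPairF hD (by simpa [Fin.snoc_last, Fin.snoc_castSucc] using hz)
      (by simpa [Fin.snoc_last, Fin.snoc_castSucc] using ht)
      (by simpa [Fin.snoc_last, Fin.snoc_castSucc] using hy)]
    simp [Fin.snoc_last, Fin.snoc_castSucc]
  · rw [sat_all]
    refine forall_congr' fun w => forall_congr' fun hw => ?_
    rw [sat_imp, sat_mem]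
    simp only [Fin.snoc_last, Fin.snoc_castSucc, Fin.castSucc_zero, snoc_cast_zero,
      Matrix.cons_val_zero]
    refine imp_congr Iff.rfl ?_
    rw [sat_all]
    refine forall_congr' fun y' => forall_congr' fun hy' => ?_
    rw [xiInner7, xiE, sat_imp, sat_imp, sat_and, sat_not, sat_eq, sat_not]
    rw [sat_eqPairF hD (by simpa [Fin.snoc_last, Fin.snoc_castSucc] using hw)
      (by simpa [Fin.snoc_last, Fin.snoc_castSucc] using ht)
      (by simpa [Fin.snoc_last, Fin.snoc_castSucc] using hy')]
    rw [sat_pairMemF hD (by simpa [Fin.snoc_last, Fin.snoc_castSucc] using hz)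
      (by simpa [Fin.snoc_last, Fin.snoc_castSucc] using hw)
      (by simp [Fin.snoc_last, Fin.snoc_castSucc, Fin.castSucc_one]
          exact hr)]
    rw [sat_pairMemF hD (by simpa [Fin.snoc_last, Fin.snoc_castSucc] using hw)
      (by simpa [Fin.snoc_last, Fin.snoc_castSucc] using hz)
      (by simp [Fin.snoc_last, Fin.snoc_castSucc, Fin.castSucc_one]
          exact hr)]
    simp [Fin.snoc_last, Fin.snoc_castSucc, Fin.castSucc_one]

/-- Separation formula for `{w ∈ g1 : ∃ y, w = pair t y}`: param `t`, free var `w`. -/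
def betaF : Fml 2 :=
  Fml.ex (eqPairF ((Fin.last 1).castSucc) (((0 : Fin 1).castSucc).castSucc) (Fin.last 2))

lemma sat_betaF (hD : TransClass D) {t w : ZFSet.{0}} (ht : t ∈ D) (hw : w ∈ D) :
    Sat D betaF (Fin.snoc (fun _ : Fin 1 => t) w) ↔ ∃ y ∈ D, w = ZFSet.pair t y := by
  rw [betaF, sat_ex]
  refine exists_congr fun y => and_congr_right fun hy => ?_
  rw [sat_eqPairF hD (by simpa [Fin.snoc_last, Fin.snoc_castSucc, -Fin.reduceLast, -Fin.reduceCastSucc] using hw)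
    (by simpa [Fin.snoc_last, Fin.snoc_castSucc, -Fin.reduceLast, -Fin.reduceCastSucc] using ht)
    (by simpa [Fin.snoc_last, Fin.snoc_castSucc, -Fin.reduceLast, -Fin.reduceCastSucc] using hy)]
  simp [Fin.snoc_last, Fin.snoc_castSucc, -Fin.reduceLast, -Fin.reduceCastSucc]

/-- Uniformization: inside `M` every set of pairs contains a function with the same domain. -/
lemma uniformize {M H : Set ZFSet.{0}} (hHt : TransClass H) (hHzfc : ModelsZFCminus H)
    (hM : ElemSub M H) {g1 : ZFSet.{0}} (hg1 : g1 ∈ M) :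
    ∃ g2 ∈ M, (∀ z, z ∈ g2 → z ∈ g1) ∧ IsFun g2 ∧
      (∀ t y : ZFSet.{0}, ZFSet.pair t y ∈ g1 → ∃ y', ZFSet.pair t y' ∈ g2) := by
  have hg1H : g1 ∈ M := hg1
  have hg1H' : g1 ∈ H := hM.1 hg1
  obtain ⟨r, hrH, hrWO⟩ := hHzfc.2.2.2.2.2.2 g1 hg1H'
  have hv2 : ∀ i, (![g1, r] : Fin 2 → ZFSet.{0}) i ∈ H := by
    intro i
    fin_cases i
    · simpa using hg1H'
    · simpa using hrH
  obtain ⟨g2, hg2H, hg2mem⟩ := hHzfc.2.2.2.2.1 2 xiF ![g1, r] hv2 g1 hg1H'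
  -- decode membership in g2
  have hg2dec : ∀ z, z ∈ H → (z ∈ g2 ↔ z ∈ g1 ∧
      ∃ t ∈ H, ∃ y ∈ H, z = ZFSet.pair t y ∧
        ∀ w ∈ H, w ∈ g1 → ∀ y' ∈ H, w = ZFSet.pair t y' → w ≠ z →
          (ZFSet.pair z w ∈ r ∧ ZFSet.pair w z ∉ r)) := by
    intro z hzH
    rw [hg2mem z, sat_xiF hHt hg1H' hrH hzH]
  -- g2 satisfies the matrix
  have hXi : Sat H XiM (Fin.snoc (fun _ : Fin 1 => g1) g2) := by
    rw [sat_XiM hHt hg1H' hg2H]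
    refine ⟨?_, ?_, ?_, ?_⟩
    · intro z hzH hz
      exact ((hg2dec z hzH).1 hz).1
    · intro z hzH hz
      obtain ⟨-, t, htH, y, hyH, he, -⟩ := (hg2dec z hzH).1 hz
      exact ⟨t, htH, y, hyH, he⟩
    · intro t htH y hyH y' hy'H h1 h2
      by_cases he : y = y'
      · exact he
      have hne : ZFSet.pair t y ≠ ZFSet.pair t y' := by
        intro hc; exact he (ZFSet.pair_injective hc).2
      have hzH1 : ZFSet.pair t y ∈ H := hHzfc.2.2.1 t htH y hyH
      have hzH2 : ZFSet.pair t y' ∈ H := hHzfc.2.2.1 t htH y' hy'H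
      obtain ⟨hin1, t1, ht1H, y1, hy1H, he1, hmin1⟩ := (hg2dec _ hzH1).1 h1
      obtain ⟨hin2, t2, ht2H, y2, hy2H, he2, hmin2⟩ := (hg2dec _ hzH2).1 h2
      have e1 := ZFSet.pair_injective he1
      have e2 := ZFSet.pair_injective he2
      have hA := hmin1 (ZFSet.pair t y') hzH2 hin2 y' hy'H (by rw [← e1.1]) hne.symm
      have hB := hmin2 (ZFSet.pair t y) hzH1 hin1 y hyH (by rw [← e2.1]) hne
      exact absurd hB.1 hA.2
    · intro t htH y hyH hty
      -- the set of pairs in g1 with first coordinate t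
      have hv1 : ∀ i, (fun _ : Fin 1 => t) i ∈ H := fun _ => htH
      obtain ⟨bt, hbtH, hbtmem⟩ := hHzfc.2.2.2.2.1 1 betaF (fun _ => t) hv1 g1 hg1H'
      have hbtdec : ∀ w, w ∈ H → (w ∈ bt ↔ w ∈ g1 ∧ ∃ y ∈ H, w = ZFSet.pair t y) := by
        intro w hwH
        rw [hbtmem w, sat_betaF hHt htH hwH]
      have htyH : ZFSet.pair t y ∈ H := hHzfc.2.2.1 t htH y hyH
      have hmem : ZFSet.pair t y ∈ bt := (hbtdec _ htyH).2 ⟨hty, y, hyH, rfl⟩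
      obtain ⟨z0, hz0bt, hz0min⟩ := hrWO.2.2.2 bt hbtH
        (fun u hu => ((hbtmem u).1 hu).1) ⟨ZFSet.pair t y, hmem⟩
      have hz0H : z0 ∈ H := hHt bt hbtH z0 hz0bt
      obtain ⟨hz0g1, y0, hy0H, hz0e⟩ := (hbtdec _ hz0H).1 hz0bt
      have hz0g2 : z0 ∈ g2 := by
        refine (hg2dec _ hz0H).2 ⟨hz0g1, t, htH, y0, hy0H, hz0e, ?_⟩
        intro w hwH hwg1 y' hy'H hwe hwne
        have hwbt : w ∈ bt := (hbtdec _ hwH).2 ⟨hwg1, y', hy'H, hwe⟩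
        refine ⟨hz0min w hwbt hwne, ?_⟩
        intro hcon
        exact (hrWO.2.1 w (by rwa [ZFSet.mem_toSet]) z0 (by rwa [ZFSet.mem_toSet]) hwne).1
          hcon (hz0min w hwbt hwne)
      exact ⟨y0, hy0H, hz0e ▸ hz0g2⟩
  -- transfer to M
  obtain ⟨g2', hg2'M, hsat⟩ := exists_in_M hM XiM (fun _ : Fin 1 => g1) (fun _ => hg1)
    (by rw [sat_ex]; exact ⟨g2, hg2H, hXi⟩)
  have hg2'H : g2' ∈ H := hM.1 hg2'M
  obtain ⟨hsub, hpairs, hsv, htot⟩ := (sat_XiM hHt hg1H' hg2'H).1 hsat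
  refine ⟨g2', hg2'M, ?_, ⟨?_, ?_⟩, ?_⟩
  · intro z hz
    exact hsub z (hHt g2' hg2'H z hz) hz
  · intro z hz
    obtain ⟨t, -, y, -, he⟩ := hpairs z (hHt g2' hg2'H z hz) hz
    exact ⟨t, y, he⟩
  · intro a c c' hac hac'
    obtain ⟨haH, hcH⟩ := pair_mem_trans hHt hg2'H hac
    obtain ⟨-, hc'H⟩ := pair_mem_trans hHt hg2'H hac'
    exact hsv a haH c hcH c' hc'H hac hac'
  · intro t y hty
    obtain ⟨htH, hyH⟩ := pair_mem_trans hHt hg1H' hty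
    obtain ⟨y', -, h⟩ := htot t htH y hyH hty
    exact ⟨y', h⟩


/-- The master lemma: a function in `M` whose graph realizes `γ` on `b`. -/
lemma hull_witness {H M : Set ZFSet.{0}} (hHt : TransClass H) (hHzfc : ModelsZFCminus H)
    (hM : ElemSub M H) {m} (γ : Fml (m+2)) (p : Fin m → ZFSet.{0}) (hp : ∀ i, p i ∈ M)
    (b : ZFSet.{0}) (hb : b ∈ M) :
    ∃ f ∈ M, IsFun f ∧
      (∀ t y : ZFSet.{0}, ZFSet.pair t y ∈ f → t ∈ b ∧ Sat H γ (Fin.snoc (Fin.snoc p t) y)) ∧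
      (∀ t ∈ b.toSet, (∃ y ∈ H, Sat H γ (Fin.snoc (Fin.snoc p t) y)) →
        ∃ y, ZFSet.pair t y ∈ f) := by
  have hpH : ∀ i, p i ∈ H := fun i => hM.1 (hp i)
  have hbH : b ∈ H := hM.1 hb
  obtain ⟨g0, hg0H, hg0⟩ := graph_in_H hHt hHzfc γ p hpH b hbH
  have hP : ∀ i, (Fin.snoc p b : Fin (m+1) → ZFSet.{0}) i ∈ M := by
    intro i
    refine Fin.lastCases ?_ (fun j => ?_) i <;> simp [Fin.snoc_last, Fin.snoc_castSucc]
    exacts [hb, hp j]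
  obtain ⟨g1, hg1M, hg1sat⟩ := exists_in_M hM (bodyF γ) (Fin.snoc p b) hP
    (by rw [sat_ex]; exact ⟨g0, hg0H, hg0⟩)
  obtain ⟨hrel, htot⟩ := (sat_bodyF hHt γ p b g1 (hM.1 hg1M)).1 hg1sat
  obtain ⟨g2, hg2M, hsub, hfun, htot2⟩ := uniformize hHt hHzfc hM hg1M
  refine ⟨g2, hg2M, hfun, ?_, ?_⟩
  · intro t y hty
    have : ZFSet.pair t y ∈ g1 := hsub _ hty
    obtain ⟨t', _, y', _, heq, ht'b, hγ⟩ := hrel _ (by rwa [ZFSet.mem_toSet])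
    obtain ⟨rfl, rfl⟩ := ZFSet.pair_injective heq
    exact ⟨ht'b, hγ⟩
  · intro t ht hpre
    rw [ZFSet.mem_toSet] at ht
    have htH : t ∈ H := hHt b hbH t ht
    obtain ⟨y, hyH, hyg⟩ := htot t htH ht hpre
    obtain ⟨y', hy'⟩ := htot2 t y hyg
    exact ⟨y', hy'⟩


/-- The Tarski–Vaught witness formula: params `F : Fin n` (functions), then `t`, `y`;
says `∃ u₀ … u_{n-1}, (⋀ pair t uᵢ ∈ Fᵢ) ∧ φ(u₀,…,u_{n-1},y)`. -/
def gammaTV {n} (φ : Fml (n+1)) : Fml (n+2) :=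
  exN n ((andN fun i : Fin n => pairMemF (Fin.castAdd n ((Fin.last n).castSucc))
      (Fin.natAdd (n+2) i) (Fin.castAdd n (Fin.castAdd 2 i))).and
    (Fml.rename (Fin.snoc (fun i : Fin n => Fin.natAdd (n+2) i)
      (Fin.castAdd n (Fin.last (n+1)))) φ))

lemma sat_gammaTV (hD : TransClass D) {n} (φ : Fml (n+1)) (F : Fin n → ZFSet.{0})
    (hF : ∀ i, F i ∈ D) {t y : ZFSet.{0}} (ht : t ∈ D) (hy : y ∈ D) :
    Sat D (gammaTV φ) (Fin.snoc (Fin.snoc F t) y) ↔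
      ∃ u : Fin n → ZFSet.{0}, (∀ i, u i ∈ D) ∧ (∀ i, ZFSet.pair t (u i) ∈ F i) ∧
        Sat D φ (Fin.snoc u y) := by
  rw [gammaTV, sat_exN]
  refine exists_congr fun u => and_congr_right fun hu => ?_
  rw [sat_and, sat_andN, sat_rename]
  have h1 : snocMany (Fin.snoc (Fin.snoc F t) y) u (Fin.castAdd n ((Fin.last n).castSucc))
      = t := by
    rw [snocMany_castAdd]; simp
  have h2 : ∀ i : Fin n, snocMany (Fin.snoc (Fin.snoc F t) y) u (Fin.natAdd (n+2) i)
      = u i := fun i => snocMany_natAdd _ _ _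
  have h3 : ∀ i : Fin n, snocMany (Fin.snoc (Fin.snoc F t) y) u
      (Fin.castAdd n (Fin.castAdd 2 i)) = F i := by
    intro i
    rw [snocMany_castAdd]
    have he : (Fin.castAdd 2 i : Fin (n+2)) = (i.castSucc).castSucc := by ext; simp
    rw [he]; simp
  have hcomp : (snocMany (Fin.snoc (Fin.snoc F t) y) u) ∘
      (Fin.snoc (fun i : Fin n => Fin.natAdd (n+2) i)
        (Fin.castAdd n (Fin.last (n+1))) : Fin (n+1) → Fin ((n+2)+n))
      = Fin.snoc u y := by
    funext j
    refine Fin.lastCases ?_ (fun i => ?_) j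
    · simp only [Function.comp_apply, Fin.snoc_last]
      rw [snocMany_castAdd]
      simp
    · simp only [Function.comp_apply, Fin.snoc_castSucc]
      rw [snocMany_natAdd]
  rw [hcomp]
  refine and_congr ?_ Iff.rfl
  refine forall_congr' fun i => ?_
  rw [sat_pairMemF hD (by rw [h1]; exact ht) (by rw [h2 i]; exact hu i)
    (by rw [h3 i]; exact hF i)]
  rw [h1, h2 i, h3 i]

lemma hull_subset_H {M H : Set ZFSet.{0}} (hHt : TransClass H) (hM : ElemSub M H)
    (x : ZFSet.{0}) : Hull M x ⊆ H := by
  rintro y ⟨f, hfM, hfun, hpair⟩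
  exact (pair_mem_trans hHt (hM.1 hfM) hpair).2

lemma subset_hull {M H : Set ZFSet.{0}} (hHt : TransClass H) (hHzfc : ModelsZFCminus H)
    (hM : ElemSub M H) {x b : ZFSet.{0}} (hb : b ∈ M) (hxb : x ∈ b) :
    M ⊆ Hull M x := by
  intro a haM
  obtain ⟨f, hfM, hfun, hcl2, hcl3⟩ := hull_witness hHt hHzfc hM
    (Fml.eq (Fin.last 2) (((0 : Fin 1)).castSucc).castSucc) (fun _ : Fin 1 => a)
    (fun _ => haM) b hb
  have haH : a ∈ H := hM.1 haM
  obtain ⟨y, hy⟩ := hcl3 x (by rwa [ZFSet.mem_toSet])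
    ⟨a, haH, by rw [sat_eq]; simp [Fin.snoc_last, -Fin.reduceLast]⟩
  have hya := (hcl2 x y hy).2
  rw [sat_eq] at hya
  simp only [Fin.snoc_last, Fin.snoc_castSucc, Fin.castSucc_zero, snoc_cast_zero] at hya
  exact ⟨f, hfM, hfun, by rwa [hya] at hy⟩

lemma self_mem_hull {M H : Set ZFSet.{0}} (hHt : TransClass H) (hHzfc : ModelsZFCminus H)
    (hM : ElemSub M H) {x b : ZFSet.{0}} (hb : b ∈ M) (hxb : x ∈ b) :
    x ∈ Hull M x := by
  have hxH : x ∈ H := hHt b (hM.1 hb) x hxb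
  obtain ⟨f, hfM, hfun, hcl2, hcl3⟩ := hull_witness hHt hHzfc hM
    (Fml.eq (Fin.last 1) ((Fin.last 0).castSucc)) Fin.elim0 (fun i => i.elim0) b hb
  obtain ⟨y, hy⟩ := hcl3 x (by rwa [ZFSet.mem_toSet])
    ⟨x, hxH, by rw [sat_eq]; simp⟩
  have hyx := (hcl2 x y hy).2
  rw [sat_eq] at hyx
  simp only [Fin.snoc_last, Fin.snoc_castSucc, Fin.castSucc_zero, snoc_cast_zero,
    snoc_fin1_zero] at hyx
  exact ⟨f, hfM, hfun, by rwa [hyx] at hy⟩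

lemma hull_countable {M : Set ZFSet.{0}} (hMc : M.Countable) (x : ZFSet.{0}) :
    (Hull M x).Countable := by
  have hsub : Hull M x ⊆ ⋃ f ∈ M, {y | IsFun f ∧ ZFSet.pair x y ∈ f} := by
    rintro y ⟨f, hfM, hfun, hp⟩
    exact Set.mem_biUnion hfM ⟨hfun, hp⟩
  refine Set.Countable.mono hsub ?_
  refine Set.Countable.biUnion hMc fun f _ => Set.Subsingleton.countable ?_
  rintro y ⟨hfun, hy⟩ y' ⟨_, hy'⟩
  exact hfun.2 x y y' hy hy'

lemma tv_step {M H : Set ZFSet.{0}} (hHt : TransClass H) (hHzfc : ModelsZFCminus H)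
    (hM : ElemSub M H) {x : ZFSet.{0}} (hx : ∃ b ∈ M, x ∈ b)
    {n} (φ : Fml (n+1)) (v : Fin n → ZFSet.{0}) (hv : ∀ i, v i ∈ Hull M x)
    (hex : ∃ w ∈ H, Sat H φ (Fin.snoc v w)) :
    ∃ y ∈ Hull M x, Sat H φ (Fin.snoc v y) := by
  obtain ⟨b, hbM, hxb⟩ := hx
  have hxH : x ∈ H := hHt b (hM.1 hbM) x hxb
  choose F hFM hFfun hFpair using hv
  obtain ⟨f, hfM, hffun, hcl2, hcl3⟩ := hull_witness hHt hHzfc hM (gammaTV φ) F hFM b hbM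
  obtain ⟨w, hwH, hw⟩ := hex
  have hpre : ∃ y0 ∈ H, Sat H (gammaTV φ) (Fin.snoc (Fin.snoc F x) y0) := by
    refine ⟨w, hwH, ?_⟩
    rw [sat_gammaTV hHt φ F (fun i => hM.1 (hFM i)) hxH hwH]
    exact ⟨v, fun i => (pair_mem_trans hHt (hM.1 (hFM i)) (hFpair i)).2, hFpair, hw⟩
  obtain ⟨y, hyf⟩ := hcl3 x (by rwa [ZFSet.mem_toSet]) hpre
  have hyH : y ∈ H := (pair_mem_trans hHt (hM.1 hfM) hyf).2
  have hsat := (hcl2 x y hyf).2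
  rw [sat_gammaTV hHt φ F (fun i => hM.1 (hFM i)) hxH hyH] at hsat
  obtain ⟨u, huH, hupair, huφ⟩ := hsat
  have huv : u = v := by
    funext i
    exact (hFfun i).2 x (u i) (v i) (hupair i) (hFpair i)
  rw [huv] at huφ
  exact ⟨y, ⟨f, hfM, hffun, hyf⟩, huφ⟩

lemma hull_elemSub {M H : Set ZFSet.{0}} (hHt : TransClass H) (hHzfc : ModelsZFCminus H)
    (hM : ElemSub M H) {x : ZFSet.{0}} (hx : ∃ b ∈ M, x ∈ b) :
    ElemSub (Hull M x) H := by
  refine ⟨hull_subset_H hHt hM x, ?_⟩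
  intro n φ
  induction φ with
  | mem i j => exact fun v hv => Iff.rfl
  | eq i j => exact fun v hv => Iff.rfl
  | not ψ ih => exact fun v hv => not_congr (ih v hv)
  | and ψ χ ih1 ih2 => exact fun v hv => and_congr (ih1 v hv) (ih2 v hv)
  | ex ψ ih =>
    intro v hv
    rw [sat_ex, sat_ex]
    constructor
    · rintro ⟨w, hwHull, hsat⟩
      refine ⟨w, hull_subset_H hHt hM x hwHull, ?_⟩
      refine (ih _ ?_).1 hsat
      intro i
      refine Fin.lastCases ?_ (fun j => ?_) i <;> simp [Fin.snoc_last, Fin.snoc_castSucc]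
      exacts [hwHull, hv j]
    · rintro ⟨w, hwH, hsat⟩
      obtain ⟨y, hyHull, hy⟩ := tv_step hHt hHzfc hM hx ψ v hv ⟨w, hwH, hsat⟩
      refine ⟨y, hyHull, ?_⟩
      refine (ih _ ?_).2 hy
      intro i
      refine Fin.lastCases ?_ (fun j => ?_) i <;> simp [Fin.snoc_last, Fin.snoc_castSucc]
      exacts [hyHull, hv j]

lemma hull_min {H N : Set ZFSet.{0}} (hHt : TransClass H) (hN : ElemSub N H)
    {M : Set ZFSet.{0}} (hMN : M ⊆ N) {x : ZFSet.{0}} (hxN : x ∈ N) :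
    Hull M x ⊆ N := by
  rintro y ⟨f, hfM, hfun, hp⟩
  have hfN : f ∈ N := hMN hfM
  have hfH : f ∈ H := hN.1 hfN
  have hxH : x ∈ H := hN.1 hxN
  have hyH : y ∈ H := (pair_mem_trans hHt hfH hp).2
  have hv : ∀ i, (![f, x] : Fin 2 → ZFSet.{0}) i ∈ N := by
    intro i
    fin_cases i
    · simpa using hfN
    · simpa using hxN
  obtain ⟨y', hy'N, hy'⟩ := exists_in_M hN
    (pairMemF (((1 : Fin 2)).castSucc) (Fin.last 2) (((0 : Fin 2)).castSucc)) ![f, x] hv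
    (by
      rw [sat_ex]
      refine ⟨y, hyH, ?_⟩
      rw [sat_pairMemF hHt (by simpa [Fin.snoc_castSucc] using hxH)
        (by simpa [Fin.snoc_last] using hyH)
        (by simpa [Fin.snoc_castSucc] using hfH)]
      simpa [Fin.snoc_last, Fin.snoc_castSucc] using hp)
  rw [sat_pairMemF hHt (by simpa [Fin.snoc_castSucc] using hxH)
    (by simpa [Fin.snoc_last] using hN.1 hy'N)
    (by simpa [Fin.snoc_castSucc] using hfH)] at hy'
  simp only [Fin.snoc_last, Fin.snoc_castSucc] at hy'
  simp only [Matrix.cons_val_one, Matrix.head_cons, Matrix.cons_val_zero, Fin.castSucc_one,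
    Fin.castSucc_zero, snoc_cast_zero, snoc_cast_one, snoc_fin2_one] at hy'
  have : y' = y := hfun.2 x y' y hy' hp
  rwa [← this]

end Aux

/-- `Hull(M,x)` is the `⊆`-minimal countable elementary substructure of the
transitive ZFC⁻-model `𝓗` extending `M` and containing `x`. -/
theorem hull_minimal_countable_elemSub
    (H : Set ZFSet.{0}) (hHtrans : TransClass H) (hHzfc : ModelsZFCminus H)
    (M : Set ZFSet.{0}) (hMc : M.Countable) (hM : ElemSub M H)
    (x : ZFSet.{0}) (hx : ∃ a ∈ M, x ∈ a) :
    M ⊆ Hull M x ∧ x ∈ Hull M x ∧ (Hull M x).Countable ∧ ElemSub (Hull M x) H ∧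
      ∀ N : Set ZFSet.{0}, N.Countable → ElemSub N H → M ⊆ N → x ∈ N →
        Hull M x ⊆ N := by
  obtain ⟨b, hbM, hxb⟩ := hx
  refine ⟨subset_hull hHtrans hHzfc hM hbM hxb, self_mem_hull hHtrans hHzfc hM hbM hxb,
    hull_countable hMc x, hull_elemSub hHtrans hHzfc hM ⟨b, hbM, hxb⟩, ?_⟩
  intro N _ hN hMN hxN
  exact hull_min hHtrans hN hMN hxN
end CcPaper
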